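/- arXiv:0812.4052 — 3 statements merged into one kernel-verified Lean document; each statement's English description precedes it below -/
import Mathlib

section
/- If each density p_i satisfies the Fokker–Planck equation ∂_t p_i = -∂_x(f_i p_i) + (1/2)∂_x²(σ_i² p_i), then the mixture q = Σ_i λ_i p_i satisfies ∂_t q = -∂_x(f q) + (1/2)∂_x²(σ² q), where f(t,x) = Σ_i Λ_i(t,x) f_i(t,x), σ²(t,x) = Σ_i Λ_i(t,x) σ_i(t,x)², and Λ_i(t,x) = λ_i p_i(t,x) / Σ_j λ_j p_j(t,x). -/
open Finset

lemma slice_contDiff {g : ℝ → ℝ → ℝ} (hg : ContDiff ℝ (⊤ : ℕ∞) (Function.uncurry g)) (t : ℝ) :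
    ContDiff ℝ (⊤ : ℕ∞) (g t) := hg.comp (contDiff_const.prodMk contDiff_id)

lemma slice_contDiff' {g : ℝ → ℝ → ℝ} (hg : ContDiff ℝ (⊤ : ℕ∞) (Function.uncurry g)) (x : ℝ) :
    ContDiff ℝ (⊤ : ℕ∞) (fun s => g s x) := hg.comp (contDiff_id.prodMk contDiff_const)

/-- If each density p_i satisfies the Fokker–Planck equation with drift f_i and diffusion
coefficient σ_i, then the mixture q = Σ_i λ_i p_i satisfies the Fokker–Planck equation with
drift f = Σ_i Λ_i f_i and squared diffusion coefficient σ² = Σ_i Λ_i σ_i², where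
Λ_i = λ_i p_i / Σ_j λ_j p_j. -/
theorem mixture_fokker_planck (m : ℕ)
    (p f σ : Fin m → ℝ → ℝ → ℝ) (l : Fin m → ℝ)
    (hp : ∀ i, ContDiff ℝ (⊤ : ℕ∞) (Function.uncurry (p i)))
    (hf : ∀ i, ContDiff ℝ (⊤ : ℕ∞) (Function.uncurry (f i)))
    (hσ : ∀ i, ContDiff ℝ (⊤ : ℕ∞) (Function.uncurry (σ i)))
    (hppos : ∀ i t x, 0 < p i t x)
    (hl : ∀ i, 0 ≤ l i) (hsum : ∑ i, l i = 1)
    (hqpos : ∀ t x, 0 < ∑ j, l j * p j t x)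
    (hFP : ∀ i t x,
      deriv (fun s => p i s x) t =
        - deriv (fun y => f i t y * p i t y) x
        + (1/2) * deriv (deriv (fun y => (σ i t y)^2 * p i t y)) x) :
    ∀ t x,
      deriv (fun s => ∑ i, l i * p i s x) t =
        - deriv (fun y =>
            (∑ i, (l i * p i t y / ∑ j, l j * p j t y) * f i t y) *
              ∑ i, l i * p i t y) x
        + (1/2) * deriv (deriv (fun y =>
            (∑ i, (l i * p i t y / ∑ j, l j * p j t y) * (σ i t y)^2) *
              ∑ i, l i * p i t y)) x := by
  intro t x
  -- rewrite the drift term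
  have key1 : (fun y =>
      (∑ i, (l i * p i t y / ∑ j, l j * p j t y) * f i t y) * ∑ i, l i * p i t y)
      = fun y => ∑ i, l i * (f i t y * p i t y) := by
    funext y
    rw [Finset.sum_mul]
    refine Finset.sum_congr rfl fun i _ => ?_
    have h := (hqpos t y).ne'
    field_simp
  have key2 : (fun y =>
      (∑ i, (l i * p i t y / ∑ j, l j * p j t y) * (σ i t y) ^ 2) * ∑ i, l i * p i t y)
      = fun y => ∑ i, l i * ((σ i t y) ^ 2 * p i t y) := by
    funext y
    rw [Finset.sum_mul]
    refine Finset.sum_congr rfl fun i _ => ?_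
    have h := (hqpos t y).ne'
    field_simp
  rw [key1, key2]
  -- smoothness facts
  have hfp : ∀ i : Fin m, ContDiff ℝ (⊤ : ℕ∞) (fun y => f i t y * p i t y) :=
    fun i => (slice_contDiff (hf i) t).mul (slice_contDiff (hp i) t)
  have hsp : ∀ i : Fin m, ContDiff ℝ (⊤ : ℕ∞) (fun y => (σ i t y) ^ 2 * p i t y) :=
    fun i => ((slice_contDiff (hσ i) t).pow 2).mul (slice_contDiff (hp i) t)
  -- time derivative of the mixture
  have hL : deriv (fun s => ∑ i, l i * p i s x) t
      = ∑ i, l i * deriv (fun s => p i s x) t := by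
    rw [deriv_fun_sum (fun i _ => ((slice_contDiff' (hp i) x).differentiable (by simp) t).const_mul _)]
    exact Finset.sum_congr rfl fun i _ => deriv_const_mul _
      ((slice_contDiff' (hp i) x).differentiable (by simp) t)
  -- first space derivative of the drift sum
  have hD1 : deriv (fun y => ∑ i, l i * (f i t y * p i t y)) x
      = ∑ i, l i * deriv (fun y => f i t y * p i t y) x := by
    rw [deriv_fun_sum (fun i _ => ((hfp i).differentiable (by simp) x).const_mul _)]
    exact Finset.sum_congr rfl fun i _ =>
      deriv_const_mul _ ((hfp i).differentiable (by simp) x)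
  -- second space derivative of the diffusion sum
  have hD2 : deriv (deriv (fun y => ∑ i, l i * ((σ i t y) ^ 2 * p i t y))) x
      = ∑ i, l i * deriv (deriv (fun y => (σ i t y) ^ 2 * p i t y)) x := by
    have hder : deriv (fun y => ∑ i, l i * ((σ i t y) ^ 2 * p i t y))
        = fun y => ∑ i, l i * deriv (fun z => (σ i t z) ^ 2 * p i t z) y := by
      funext y
      rw [deriv_fun_sum (fun i _ => ((hsp i).differentiable (by simp) y).const_mul _)]
      exact Finset.sum_congr rfl fun i _ =>
        deriv_const_mul _ ((hsp i).differentiable (by simp) y)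
    rw [hder]
    have hds : ∀ i : Fin m, ContDiff ℝ (⊤ : ℕ∞) (deriv (fun z => (σ i t z) ^ 2 * p i t z)) :=
      fun i => ((contDiff_infty_iff_deriv.mp ((hsp i).of_le (by simp))).2)
    rw [deriv_fun_sum (fun i _ => ((hds i).differentiable (by norm_num) x).const_mul _)]
    exact Finset.sum_congr rfl fun i _ =>
      deriv_const_mul _ ((hds i).differentiable (by norm_num) x)
  rw [hL, hD1, hD2]
  calc ∑ i, l i * deriv (fun s => p i s x) t
      = ∑ i, (- (l i * deriv (fun y => f i t y * p i t y) x)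
        + (1/2) * (l i * deriv (deriv (fun y => (σ i t y)^2 * p i t y)) x)) :=
        Finset.sum_congr rfl fun i _ => by rw [hFP i t x]; ring
    _ = _ := by
        rw [Finset.sum_add_distrib, Finset.sum_neg_distrib, ← Finset.mul_sum]
end

section
/- Suppose C(K) = e^{-R} ∫_K^∞ (x − K) p(x) dx for a continuous probability density p on (0,∞) with finite mean. Then C is twice differentiable on (0,∞) and C''(K) = e^{-R} p(K) for all K > 0 (the Breeden–Litzenberger formula). -/
open MeasureTheory Set Filter Topology

/-!
Writing `C(K) = e^{-R} (∫_K^∞ x p(x) dx - K ∫_K^∞ p(x) dx)`, the fundamental theorem of calculus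
gives `C'(K) = e^{-R} (-K p(K) - ∫_K^∞ p + K p(K)) = -e^{-R} ∫_K^∞ p(x) dx`, and differentiating
once more gives `C''(K) = e^{-R} p(K)`.
-/

section TailIntegral

variable {E : Type*} [NormedAddCommGroup E] [NormedSpace ℝ E] [CompleteSpace E]

theorem hasDerivAt_integral_Ioi {f : ℝ → E} {a y : ℝ} (hf : IntegrableOn f (Ioi a))
    (hay : a < y) (hmeas : StronglyMeasurableAtFilter f (𝓝 y)) (hcont : ContinuousAt f y) :
    HasDerivAt (fun u => ∫ x in Ioi u, f x) (-f y) y := by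
  have hftc : HasDerivAt (fun u => ∫ x in a..u, f x) (f y) y :=
    intervalIntegral.integral_hasDerivAt_right
      ((intervalIntegrable_iff_integrableOn_Ioc_of_le hay.le).2
        (hf.mono_set Ioc_subset_Ioi_self)) hmeas hcont
  refine ((hasDerivAt_const y (∫ x in Ioi a, f x)).sub hftc).congr_of_eventuallyEq ?_
    |>.congr_deriv (zero_sub _)
  filter_upwards [Ioi_mem_nhds hay] with u hu
  exact eq_sub_of_add_eq' <|
    intervalIntegral.integral_interval_add_Ioi hf (hf.mono_set (Ioi_subset_Ioi hu.le))

theorem ContinuousOn.hasDerivAt_integral_Ioi {f : ℝ → E} {a y : ℝ}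
    (hcont : ContinuousOn f (Ioi a)) (hf : IntegrableOn f (Ioi a)) (hay : a < y) :
    HasDerivAt (fun u => ∫ x in Ioi u, f x) (-f y) y :=
  _root_.hasDerivAt_integral_Ioi hf hay (hcont.stronglyMeasurableAtFilter isOpen_Ioi y hay)
    (hcont.continuousAt (Ioi_mem_nhds hay))

end TailIntegral

theorem integral_sub_mul_eq {p : ℝ → ℝ} {s : Set ℝ} {μ : Measure ℝ} (k : ℝ)
    (hp : IntegrableOn p s μ) (hxp : IntegrableOn (fun x => x * p x) s μ) :
    ∫ x in s, (x - k) * p x ∂μ = ∫ x in s, x * p x ∂μ - k * ∫ x in s, p x ∂μ := by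
  simp_rw [sub_mul, ← integral_const_mul]
  exact integral_sub hxp (hp.const_mul k)

theorem hasDerivAt_integral_Ioi_sub_mul {p : ℝ → ℝ} {a K : ℝ} (hcont : ContinuousOn p (Ioi a))
    (hp : IntegrableOn p (Ioi a)) (hxp : IntegrableOn (fun x => x * p x) (Ioi a)) (haK : a < K) :
    HasDerivAt (fun k => ∫ x in Ioi k, (x - k) * p x) (-∫ x in Ioi K, p x) K := by
  have hT1 := (continuousOn_id.mul hcont).hasDerivAt_integral_Ioi hxp haK
  have hT0 := hcont.hasDerivAt_integral_Ioi hp haK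
  refine ((hT1.sub ((hasDerivAt_id K).mul hT0)).congr_of_eventuallyEq ?_).congr_deriv ?_
  · filter_upwards [Ioi_mem_nhds haK] with k hk
    exact integral_sub_mul_eq k (hp.mono_set (Ioi_subset_Ioi hk.le))
      (hxp.mono_set (Ioi_subset_Ioi hk.le))
  · simp only [Pi.mul_apply, id_eq]
    ring

theorem breeden_litzenberger_general
    (p : ℝ → ℝ) (R : ℝ) (C : ℝ → ℝ)
    (hcont : ContinuousOn p (Set.Ioi 0))
    (hint : IntegrableOn p (Set.Ioi 0))
    (hmean : IntegrableOn (fun x => x * p x) (Set.Ioi 0))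
    (hC : ∀ K, C K = Real.exp (-R) * ∫ x in Set.Ioi K, (x - K) * p x) :
    ∀ K : ℝ, 0 < K →
      DifferentiableAt ℝ C K ∧ DifferentiableAt ℝ (deriv C) K ∧
        deriv (deriv C) K = Real.exp (-R) * p K := by
  intro K hK
  have hC' (k : ℝ) (hk : 0 < k) : HasDerivAt C (Real.exp (-R) * -∫ x in Ioi k, p x) k := by
    rw [funext hC]
    exact (hasDerivAt_integral_Ioi_sub_mul hcont hint hmean hk).const_mul _
  have hderivC : deriv C =ᶠ[𝓝 K] fun k => Real.exp (-R) * -∫ x in Ioi k, p x := by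
    filter_upwards [Ioi_mem_nhds hK] with k hk using (hC' k hk).deriv
  have hC'' :
      HasDerivAt (fun k => Real.exp (-R) * -∫ x in Ioi k, p x) (Real.exp (-R) * p K) K := by
    simpa using (hcont.hasDerivAt_integral_Ioi hint hK).neg.const_mul (Real.exp (-R))
  exact ⟨(hC' K hK).differentiableAt, hderivC.differentiableAt_iff.2 hC''.differentiableAt,
    by rw [hderivC.deriv_eq, hC''.deriv]⟩

/-- Breeden–Litzenberger: if C(K) = e^{-R} ∫_K^∞ (x−K) p(x) dx for a continuous probability
density p on (0,∞) with finite mean, then C is twice differentiable on (0,∞) and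
C''(K) = e^{-R} p(K) for all K > 0. -/
theorem breeden_litzenberger
    (p : ℝ → ℝ) (R : ℝ) (C : ℝ → ℝ)
    (hcont : ContinuousOn p (Set.Ioi 0))
    (hnonneg : ∀ x ∈ Set.Ioi (0:ℝ), 0 ≤ p x)
    (hint : IntegrableOn p (Set.Ioi 0))
    (hmean : IntegrableOn (fun x => x * p x) (Set.Ioi 0))
    (hprob : (∫ x in Set.Ioi (0:ℝ), p x) = 1)
    (hC : ∀ K, C K = Real.exp (-R) * ∫ x in Set.Ioi K, (x - K) * p x) :
    ∀ K : ℝ, 0 < K →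
      DifferentiableAt ℝ C K ∧ DifferentiableAt ℝ (deriv C) K ∧
        deriv (deriv C) K = Real.exp (-R) * p K :=
  breeden_litzenberger_general p R C hcont hint hmean hC
end

section
/- Let S_T have density Σ_i λ_i ℓ_i(T, ·) where ℓ_i(T,·) is the lognormal density with parameters (ln s_0 + R(T) − V_i(T)²/2, V_i(T)²), and define σ²_mix(T,y) = Σ_i Λ_i(T,y) ν_i(T)² with Λ_i(T,y) = λ_i ℓ_i(T,y)/Σ_j λ_j ℓ_j(T,y). Then E[S_T σ²_mix(T,S_T)] = s_0 e^{R(T)} Σ_i λ_i ν_i(T)², E[σ²_mix(T,S_T)] = Σ_i λ_i ν_i(T)², and E[S_T] = s_0 e^{R(T)}; hence Cov(S_T, σ²_mix(T,S_T)) = 0. -/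
/-!
The posterior weights `Λᵢ = λᵢ ℓᵢ / q` of the mixture `q = Σ λⱼ ℓⱼ` satisfy `q Λᵢ = λᵢ ℓᵢ`, so
integrating `g(y) σ²_mix(y)` against the law `q` of `S_T` gives `Σ λᵢ νᵢ² ∫ g ℓᵢ`. Substituting
`y = eˣ` turns `ℓᵢ` into a Gaussian density, so each `ℓᵢ` has mass one and mean
`exp (μᵢ + Vᵢ² / 2) = s₀ e^R`: the drift correction `-Vᵢ² / 2` gives every component the same mean.
Hence `E[S_T σ²_mix(S_T)] = s₀ e^R Σ λᵢ νᵢ² = E[S_T] E[σ²_mix(S_T)]`.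
-/

open MeasureTheory Finset

/-- Lognormal density with parameters `μ` (log-mean) and `V` (log-variance). -/
noncomputable def lognormDensity (μ V y : ℝ) : ℝ :=
  if 0 < y then
    Real.exp (-(Real.log y - μ)^2 / (2 * V)) / (y * Real.sqrt (2 * Real.pi * V))
  else 0

open ProbabilityTheory Real

section ExpSubstitution

variable {E : Type*} [NormedAddCommGroup E] [NormedSpace ℝ E] {g : ℝ → E}

lemma integral_eq_integral_exp_smul_comp_exp (hg : ∀ y ≤ 0, g y = 0) :
    ∫ y, g y = ∫ x, exp x • g (exp x) := by
  rw [← setIntegral_eq_integral_of_forall_compl_eq_zero (s := Set.Ioi 0)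
      fun y hy => hg y (not_lt.1 hy), ← range_exp, ← Set.image_univ,
    integral_image_eq_integral_abs_deriv_smul MeasurableSet.univ
      (fun x _ => (hasDerivAt_exp x).hasDerivWithinAt) exp_injective.injOn,
    Measure.restrict_univ]
  simp only [abs_exp]

lemma integrable_iff_integrable_exp_smul_comp_exp (hg : ∀ y ≤ 0, g y = 0) :
    Integrable g ↔ Integrable fun x => exp x • g (exp x) := by
  have hsupp : Function.support g ⊆ Set.Ioi 0 := fun y hy => not_le.1 fun h => hy (hg y h)
  rw [← integrableOn_iff_integrable_of_support_subset hsupp, ← range_exp, ← Set.image_univ,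
    integrableOn_image_iff_integrableOn_abs_deriv_smul MeasurableSet.univ
      (fun x _ => (hasDerivAt_exp x).hasDerivWithinAt) exp_injective.injOn,
    integrableOn_univ]
  simp only [abs_exp]

end ExpSubstitution

lemma exp_mul_gaussianPDFReal (μ : ℝ) (v : NNReal) (x : ℝ) :
    exp x * gaussianPDFReal μ v x = exp (μ + v / 2) * gaussianPDFReal (μ + v) v x := by
  rcases eq_or_ne v 0 with rfl | hv
  · simp
  have hv' : (v : ℝ) ≠ 0 := by exact_mod_cast hv
  simp only [gaussianPDFReal, mul_left_comm (exp _), ← exp_add]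
  congr 2
  field_simp
  ring

section Lognormal

lemma lognormDensity_nonneg (μ v y : ℝ) : 0 ≤ lognormDensity μ v y := by
  unfold lognormDensity
  split_ifs with hy
  · exact div_nonneg (exp_nonneg _) (mul_nonneg hy.le (sqrt_nonneg _))
  · exact le_rfl

lemma lognormDensity_of_nonpos (μ v : ℝ) {y : ℝ} (hy : y ≤ 0) : lognormDensity μ v y = 0 :=
  if_neg hy.not_gt

lemma measurable_lognormDensity (μ v : ℝ) : Measurable (lognormDensity μ v) := by
  unfold lognormDensity
  exact Measurable.ite measurableSet_Ioi (by fun_prop) measurable_const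

lemma exp_mul_lognormDensity_exp (μ : ℝ) {v : ℝ} (hv : 0 ≤ v) (x : ℝ) :
    exp x * lognormDensity μ v (exp x) = gaussianPDFReal μ v.toNNReal x := by
  rw [lognormDensity, if_pos (exp_pos x), log_exp, gaussianPDFReal, coe_toNNReal _ hv]
  field_simp

variable (μ : ℝ) {v : ℝ}

lemma integrable_lognormDensity (hv : 0 ≤ v) : Integrable (lognormDensity μ v) := by
  rw [integrable_iff_integrable_exp_smul_comp_exp fun y => lognormDensity_of_nonpos μ v]
  simpa only [smul_eq_mul, exp_mul_lognormDensity_exp μ hv] using integrable_gaussianPDFReal _ _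

lemma integral_lognormDensity (hv : 0 < v) : ∫ y, lognormDensity μ v y = 1 := by
  rw [integral_eq_integral_exp_smul_comp_exp fun y => lognormDensity_of_nonpos μ v]
  simpa only [smul_eq_mul, exp_mul_lognormDensity_exp μ hv.le]
    using integral_gaussianPDFReal_eq_one μ (toNNReal_pos.2 hv).ne'

lemma id_mul_lognormDensity_of_nonpos {y : ℝ} (hy : y ≤ 0) : y * lognormDensity μ v y = 0 := by
  rw [lognormDensity_of_nonpos μ v hy, mul_zero]

lemma exp_smul_exp_mul_lognormDensity_exp (hv : 0 ≤ v) (x : ℝ) :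
    exp x • (exp x * lognormDensity μ v (exp x))
      = exp (μ + v / 2) * gaussianPDFReal (μ + v) v.toNNReal x := by
  rw [smul_eq_mul, exp_mul_lognormDensity_exp μ hv, exp_mul_gaussianPDFReal, coe_toNNReal _ hv]

lemma integrable_id_mul_lognormDensity (hv : 0 ≤ v) :
    Integrable fun y => y * lognormDensity μ v y := by
  rw [integrable_iff_integrable_exp_smul_comp_exp fun y => id_mul_lognormDensity_of_nonpos μ]
  simpa only [exp_smul_exp_mul_lognormDensity_exp μ hv]
    using (integrable_gaussianPDFReal _ _).const_mul _

lemma integral_id_mul_lognormDensity (hv : 0 < v) :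
    ∫ y, y * lognormDensity μ v y = exp (μ + v / 2) := by
  rw [integral_eq_integral_exp_smul_comp_exp fun y => id_mul_lognormDensity_of_nonpos μ]
  simp only [exp_smul_exp_mul_lognormDensity_exp μ hv.le, integral_const_mul,
    integral_gaussianPDFReal_eq_one _ (toNNReal_pos.2 hv).ne', mul_one]

end Lognormal

lemma sum_mul_sum_div_sum_mul {ι : Type*} (s : Finset ι) {a : ι → ℝ} (ha : ∀ i ∈ s, 0 ≤ a i)
    (c : ι → ℝ) : (∑ i ∈ s, a i) * ∑ i ∈ s, a i / (∑ j ∈ s, a j) * c i = ∑ i ∈ s, a i * c i := by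
  by_cases h : ∑ j ∈ s, a j = 0
  · have ha0 := (sum_eq_zero_iff_of_nonneg ha).1 h
    rw [h, zero_mul, eq_comm]
    exact sum_eq_zero fun i hi => by rw [ha0 i hi, zero_mul]
  · rw [mul_sum]
    exact sum_congr rfl fun i _ => by field_simp

lemma integral_sum_const_mul {ι α : Type*} [MeasurableSpace α] {μ : Measure α} (s : Finset ι)
    (c : ι → ℝ) {f : ι → α → ℝ} (hf : ∀ i ∈ s, Integrable (f i) μ) :
    ∫ x, ∑ i ∈ s, c i * f i x ∂μ = ∑ i ∈ s, c i * ∫ x, f i x ∂μ := by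
  rw [integral_finsetSum _ fun i hi => (hf i hi).const_mul _]
  exact sum_congr rfl fun i _ => integral_const_mul _ _

section Mixture

variable {ι α : Type*} [Fintype ι] (l : ι → ℝ) (p : ι → α → ℝ)

def mixtureDensity (y : α) : ℝ := ∑ i, l i * p i y

/-- `l i * p i y / mixtureDensity l p y` is the posterior weight `Λᵢ(y)` of component `i`. -/
noncomputable def posteriorMean (c : ι → ℝ) (y : α) : ℝ :=
  ∑ i, l i * p i y / mixtureDensity l p y * c i

variable {l p}

lemma mixtureDensity_nonneg (hlp : ∀ i y, 0 ≤ l i * p i y) (y : α) : 0 ≤ mixtureDensity l p y :=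
  sum_nonneg fun i _ => hlp i y

lemma mixtureDensity_mul_posteriorMean (hlp : ∀ i y, 0 ≤ l i * p i y) (c : ι → ℝ) (y : α) :
    mixtureDensity l p y * posteriorMean l p c y = ∑ i, l i * c i * p i y :=
  (sum_mul_sum_div_sum_mul _ (fun i _ => hlp i y) _).trans (sum_congr rfl fun i _ => by ring)

variable [MeasurableSpace α] {μ : Measure α}

lemma measurable_mixtureDensity (hp : ∀ i, Measurable (p i)) : Measurable (mixtureDensity l p) :=
  measurable_sum _ fun i _ => (hp i).const_mul _

lemma measurable_posteriorMean (hp : ∀ i, Measurable (p i)) (c : ι → ℝ) :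
    Measurable (posteriorMean l p c) :=
  measurable_sum _ fun i _ =>
    (((hp i).const_mul _).div (measurable_mixtureDensity hp)).mul_const _

lemma integral_mixtureDensity_mul {g : α → ℝ} (hg : ∀ i, Integrable (fun y => g y * p i y) μ) :
    ∫ y, mixtureDensity l p y * g y ∂μ = ∑ i, l i * ∫ y, g y * p i y ∂μ := by
  simp only [mixtureDensity, sum_mul, mul_assoc, mul_comm (p _ _)]
  exact integral_sum_const_mul _ _ fun i _ => hg i

lemma integral_mixtureDensity_mul_posteriorMean_mul (hlp : ∀ i y, 0 ≤ l i * p i y)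
    (c : ι → ℝ) {g : α → ℝ} (hg : ∀ i, Integrable (fun y => g y * p i y) μ) :
    ∫ y, mixtureDensity l p y * (posteriorMean l p c y * g y) ∂μ
      = ∑ i, l i * c i * ∫ y, g y * p i y ∂μ := by
  simp only [← mul_assoc, mixtureDensity_mul_posteriorMean hlp, sum_mul]
  simp only [mul_assoc (_ * _), mul_comm (p _ _)]
  exact integral_sum_const_mul _ _ fun i _ => hg i

end Mixture

lemma integral_comp_eq_integral_smul_of_map_eq_withDensity {Ω α E : Type*} [MeasurableSpace Ω]
    [MeasurableSpace α] [NormedAddCommGroup E] [NormedSpace ℝ E] {P : Measure Ω} {μ : Measure α}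
    {S : Ω → α} (hS : Measurable S) {q : α → ℝ} (hq : Measurable q) (hq0 : ∀ y, 0 ≤ q y)
    (hlaw : P.map S = μ.withDensity fun y => ENNReal.ofReal (q y)) {f : α → E}
    (hf : StronglyMeasurable f) : ∫ ω, f (S ω) ∂P = ∫ y, q y • f y ∂μ := by
  rw [← integral_map hS.aemeasurable hf.aestronglyMeasurable, hlaw,
    integral_withDensity_eq_integral_toReal_smul hq.ennreal_ofReal
      (ae_of_all _ fun _ => ENNReal.ofReal_lt_top)]
  simp only [ENNReal.toReal_ofReal (hq0 _)]

theorem lognormal_mixture_zero_terminal_covariance_general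
    {Ω : Type*} [MeasurableSpace Ω] (P : Measure Ω) [IsProbabilityMeasure P]
    (S : Ω → ℝ) (hS : Measurable S)
    (n : ℕ) (s0 R : ℝ) (hs0 : 0 < s0)
    (ν V l : Fin n → ℝ) (hV : ∀ i, 0 < V i)
    (hl : ∀ i, 0 ≤ l i) (hsum : ∑ i, l i = 1)
    (q : ℝ → ℝ)
    (hq : q = fun y => ∑ i, l i * lognormDensity (Real.log s0 + R - (V i)^2 / 2) ((V i)^2) y)
    (σ2 : ℝ → ℝ)
    (hσ2 : σ2 = fun y => ∑ i,
      (l i * lognormDensity (Real.log s0 + R - (V i)^2 / 2) ((V i)^2) y / q y) * (ν i)^2)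
    (hlaw : P.map S = volume.withDensity (fun y => ENNReal.ofReal (q y))) :
    (∫ ω, S ω * σ2 (S ω) ∂P) = s0 * Real.exp R * ∑ i, l i * (ν i)^2 ∧
    (∫ ω, σ2 (S ω) ∂P) = ∑ i, l i * (ν i)^2 ∧
    (∫ ω, S ω ∂P) = s0 * Real.exp R ∧
    (∫ ω, S ω * σ2 (S ω) ∂P) - (∫ ω, S ω ∂P) * (∫ ω, σ2 (S ω) ∂P) = 0 := by
  set p : Fin n → ℝ → ℝ := fun i => lognormDensity (Real.log s0 + R - (V i)^2 / 2) ((V i)^2)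
  obtain rfl : q = mixtureDensity l p := hq
  obtain rfl : σ2 = posteriorMean l p (fun i => ν i ^ 2) := hσ2
  have hv : ∀ i, 0 < V i ^ 2 := fun i => pow_pos (hV i) 2
  have hlp : ∀ i y, 0 ≤ l i * p i y := fun i y => mul_nonneg (hl i) (lognormDensity_nonneg _ _ _)
  have hp : ∀ i, Measurable (p i) := fun i => measurable_lognormDensity _ _
  have hp_int : ∀ i, Integrable fun y => 1 * p i y := fun i => by
    simpa only [one_mul] using integrable_lognormDensity _ (hv i).le
  have hp_int_mean : ∀ i, Integrable fun y => y * p i y := fun i =>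
    integrable_id_mul_lognormDensity _ (hv i).le
  have hp_mass : ∀ i, ∫ y, 1 * p i y = 1 := fun i => by
    simpa only [one_mul] using integral_lognormDensity _ (hv i)
  have hp_mean : ∀ i, ∫ y, y * p i y = s0 * exp R := fun i => by
    rw [integral_id_mul_lognormDensity _ (hv i), sub_add_cancel, exp_add, exp_log hs0]
  have hE : ∀ f : ℝ → ℝ, Measurable f → ∫ ω, f (S ω) ∂P = ∫ y, mixtureDensity l p y * f y :=
    fun f hf => integral_comp_eq_integral_smul_of_map_eq_withDensity hS
      (measurable_mixtureDensity hp) (mixtureDensity_nonneg hlp) hlaw hf.stronglyMeasurable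
  have hS_mean : ∫ ω, S ω ∂P = s0 * exp R := by
    rw [hE (fun y => y) measurable_id, integral_mixtureDensity_mul hp_int_mean]
    simp only [hp_mean, ← sum_mul, hsum, one_mul]
  have hσ2_mean : ∫ ω, posteriorMean l p (fun i => ν i ^ 2) (S ω) ∂P = ∑ i, l i * ν i ^ 2 := by
    rw [hE _ (measurable_posteriorMean hp _)]
    simpa only [hp_mass, mul_one]
      using integral_mixtureDensity_mul_posteriorMean_mul hlp (fun i => ν i ^ 2) hp_int
  have hSσ2_mean : ∫ ω, S ω * posteriorMean l p (fun i => ν i ^ 2) (S ω) ∂P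
      = s0 * exp R * ∑ i, l i * ν i ^ 2 := by
    rw [hE (fun y => y * _) (measurable_id.mul (measurable_posteriorMean hp _))]
    simp only [mul_comm _ (posteriorMean _ _ _ _),
      integral_mixtureDensity_mul_posteriorMean_mul hlp _ hp_int_mean, hp_mean, ← sum_mul]
    exact mul_comm _ _
  refine ⟨hSσ2_mean, hσ2_mean, hS_mean, ?_⟩
  rw [hSσ2_mean, hσ2_mean, hS_mean, sub_self]

/-- Zero terminal correlation in the lognormal mixture dynamics: if S_T has density
Σ_i λ_i ℓ_i with ℓ_i lognormal of parameters (ln s_0 + R − V_i²/2, V_i²), and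
σ²_mix(y) = Σ_i Λ_i(y) ν_i², then E[S_T σ²_mix(S_T)] = s_0 e^R Σ λ_i ν_i²,
E[σ²_mix(S_T)] = Σ λ_i ν_i², E[S_T] = s_0 e^R, hence Cov(S_T, σ²_mix(S_T)) = 0. -/
theorem lognormal_mixture_zero_terminal_covariance
    {Ω : Type*} [MeasurableSpace Ω] (P : Measure Ω) [IsProbabilityMeasure P]
    (S : Ω → ℝ) (hS : Measurable S)
    (n : ℕ) (s0 R : ℝ) (hs0 : 0 < s0)
    (ν V l : Fin n → ℝ) (hν : ∀ i, 0 ≤ ν i) (hV : ∀ i, 0 < V i)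
    (hl : ∀ i, 0 ≤ l i) (hsum : ∑ i, l i = 1)
    (q : ℝ → ℝ)
    (hq : q = fun y => ∑ i, l i * lognormDensity (Real.log s0 + R - (V i)^2 / 2) ((V i)^2) y)
    (σ2 : ℝ → ℝ)
    (hσ2 : σ2 = fun y => ∑ i,
      (l i * lognormDensity (Real.log s0 + R - (V i)^2 / 2) ((V i)^2) y / q y) * (ν i)^2)
    (hlaw : P.map S = volume.withDensity (fun y => ENNReal.ofReal (q y))) :
    (∫ ω, S ω * σ2 (S ω) ∂P) = s0 * Real.exp R * ∑ i, l i * (ν i)^2 ∧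
    (∫ ω, σ2 (S ω) ∂P) = ∑ i, l i * (ν i)^2 ∧
    (∫ ω, S ω ∂P) = s0 * Real.exp R ∧
    (∫ ω, S ω * σ2 (S ω) ∂P) - (∫ ω, S ω ∂P) * (∫ ω, σ2 (S ω) ∂P) = 0 :=
  lognormal_mixture_zero_terminal_covariance_general P S hS n s0 R hs0 ν V l hV hl hsum q hq σ2 hσ2
    hlaw
end
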